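/- Let H be a connected k-uniform hypergraph with maximum degree Δ ≥ 2. Then the maximum-modulus zero λ(H) of μ(H,x) is a real positive number, it is a simple root of μ(H,x), and it is not a root of the derivative μ'(H,x) = Σ_{v∈V(H)} μ(H−v,x); in fact Σ_{v∈V(H)} μ(H−v,λ(H)) > 0. -/

import Mathlib

open scoped Classical

structure FinHypergraph (α : Type*) [DecidableEq α] where
  verts : Finset α
  edges : Finset (Finset α)
  edge_sub : ∀ e ∈ edges, e ⊆ verts

namespace FinHypergraph

variable {α : Type*} [DecidableEq α] {β : Type*} [DecidableEq β]

/-- `H` is `k`-uniform: every edge has exactly `k` vertices. -/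
def IsUniform (H : FinHypergraph α) (k : ℕ) : Prop := ∀ e ∈ H.edges, e.card = k

/-- The degree of a vertex: the number of edges containing it. -/
def degree (H : FinHypergraph α) (v : α) : ℕ := (H.edges.filter (fun e => v ∈ e)).card

/-- `Δ` is the maximum degree of `H`. -/
def maxDegree (H : FinHypergraph α) (Δ : ℕ) : Prop :=
  (∀ v, H.degree v ≤ Δ) ∧ ∃ v ∈ H.verts, H.degree v = Δ

/-- Two vertices are adjacent if some edge contains both. -/
def Adj (H : FinHypergraph α) (a b : α) : Prop := ∃ e ∈ H.edges, a ∈ e ∧ b ∈ e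

/-- `H` is connected: nonempty and any two vertices joined by a walk. -/
def Connected (H : FinHypergraph α) : Prop :=
  H.verts.Nonempty ∧ ∀ a ∈ H.verts, ∀ b ∈ H.verts, Relation.ReflTransGen H.Adj a b

/-- A matching: a set of pairwise disjoint edges of `H`. -/
def IsMatching (H : FinHypergraph α) (M : Finset (Finset α)) : Prop :=
  M ⊆ H.edges ∧ ∀ e ∈ M, ∀ f ∈ M, e ≠ f → Disjoint e f

/-- `p(H, r)`: the number of matchings of size `r`. -/
noncomputable def matchCount (H : FinHypergraph α) (r : ℕ) : ℕ :=
  (H.edges.powerset.filter (fun M => M.card = r ∧ H.IsMatching M)).card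

/-- The matching polynomial `μ(H,x) = Σ_r (-1)^r p(H,r) x^{|V| - k r}`. -/
noncomputable def matchingPoly (H : FinHypergraph α) (k : ℕ) : Polynomial ℝ :=
  ∑ r ∈ Finset.range (H.edges.card + 1),
    Polynomial.C ((-1 : ℝ) ^ r * (H.matchCount r : ℝ)) * Polynomial.X ^ (H.verts.card - k * r)

/-- Deleting a set of vertices: induced sub-hypergraph on `verts \ W`. -/
def delete (H : FinHypergraph α) (W : Finset α) : FinHypergraph α where
  verts := H.verts \ W
  edges := H.edges.filter (fun e => Disjoint e W)
  edge_sub := by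
    intro e he
    simp only [Finset.mem_filter] at he
    exact Finset.subset_sdiff.mpr ⟨H.edge_sub e he.1, he.2⟩

/-- The set of moduli of the complex zeros of a real polynomial. -/
def rootModuli (p : Polynomial ℝ) : Set ℝ :=
  {m | ∃ z : ℂ, (Polynomial.aeval z) p = 0 ∧ ‖z‖ = m}

/-- `λ(H)`: the maximum modulus of the complex zeros of the matching polynomial. -/
noncomputable def lam (H : FinHypergraph α) (k : ℕ) : ℝ :=
  sSup (rootModuli (H.matchingPoly k))

end FinHypergraph

/-!
Write `θ(G)` for the largest real root of `μ(G)`. Everything comes from the vertex recursion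
`μ(H) = x μ(H - v) - Σ_{e ∋ v} μ(H - e)`. By induction on `|V|` it shows that `θ` can only
drop under vertex deletion, and that for `|z| > θ(H)`
`|μ(H - W, z)| / |μ(H, z)| ≤ μ(H - W, |z|) / μ(H, |z|)`; with `W = V(H)` this gives
`|μ(H, z)| ≥ μ(H, |z|) > 0`, so `λ(H) = θ(H)`.

For connected `H` and `θ = θ(H)`, no `μ(H - W)` with `∅ ≠ W ⊆ V` vanishes at `θ`.
Otherwise take such a `W` of maximal size and an edge `e` meeting both `W` and `V \ W`, with
`w ∈ e ∩ W`. Then `θ` is also a root of `μ(H - (W \ e) - w)`, and since all edge terms of the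
recursion at `w` in `H - (W \ e)` are nonnegative at `θ`, they all vanish:
`μ(H - (W ∪ e), θ) = 0`, against maximality. Hence every `μ(H - v, θ)` is positive, and so is
`μ'(H, θ) = Σ_v μ(H - v, θ)`.
-/

theorem Relation.ReflTransGen.exists_rel_of_pred_of_not_pred {β : Type*} {r : β → β → Prop}
    {p : β → Prop} {a b : β} (h : Relation.ReflTransGen r a b) (ha : p a) (hb : ¬ p b) :
    ∃ c d, r c d ∧ p c ∧ ¬ p d := by
  induction h with
  | refl => exact absurd ha hb
  | @tail c d _ hcd ih => exact if hc : p c then ⟨c, d, hcd, hc, hb⟩ else ih hc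

namespace Polynomial

/-- The largest real root of `p`, or `0` (as `sSup ∅`) if `p` has none. -/
noncomputable def maxRoot (p : ℝ[X]) : ℝ := sSup {x | p.IsRoot x}

variable {p : ℝ[X]} {x : ℝ}

lemma le_maxRoot (hp : p ≠ 0) (hx : p.IsRoot x) : x ≤ maxRoot p :=
  le_csSup (finite_setOfPred_isRoot hp).bddAbove hx

lemma isRoot_maxRoot (hp : p ≠ 0) (h : ∃ x, p.IsRoot x) : p.IsRoot (maxRoot p) :=
  Set.Nonempty.csSup_mem h (finite_setOfPred_isRoot hp)

lemma maxRoot_mul_eval_maxRoot : maxRoot p * p.eval (maxRoot p) = 0 := by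
  by_cases hp : p = 0
  · simp [hp]
  by_cases h : ∃ x, p.IsRoot x
  · rw [(isRoot_maxRoot hp h).eq_zero, mul_zero]
  · have : {x | p.IsRoot x} = ∅ := Set.eq_empty_iff_forall_notMem.mpr (not_exists.mp h)
    rw [maxRoot, this, Real.sSup_empty, zero_mul]

lemma Monic.eval_pos_of_maxRoot_lt (hp : p.Monic) (hx : maxRoot p < x) : 0 < p.eval x :=
  zero_lt_eval_of_roots_lt_of_leadingCoeff_nonneg
    (fun _ hy => (le_maxRoot hp.ne_zero hy).trans_lt hx) (by simp [hp.leadingCoeff])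

lemma Monic.eval_nonneg_of_maxRoot_le (hp : p.Monic) (hx : maxRoot p ≤ x) : 0 ≤ p.eval x :=
  zero_le_eval_of_roots_le_of_leadingCoeff_nonneg
    (fun _ hy => (le_maxRoot hp.ne_zero hy).trans hx) (by simp [hp.leadingCoeff])

lemma Monic.exists_isRoot_ge_of_eval_nonpos (hp : p.Monic) (hx : p.eval x ≤ 0) :
    ∃ y, p.IsRoot y ∧ x ≤ y := by
  by_contra! h
  exact hx.not_gt (zero_lt_eval_of_roots_lt_of_leadingCoeff_nonneg h (by simp [hp.leadingCoeff]))

end Polynomial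

namespace FinHypergraph

open Polynomial Finset

variable {α : Type*} [DecidableEq α] {H : FinHypergraph α} {k : ℕ}

@[ext] lemma ext {H H' : FinHypergraph α} (hv : H.verts = H'.verts) (he : H.edges = H'.edges) :
    H = H' := by
  cases H; cases H'; simp_all

@[simp] lemma delete_verts (W : Finset α) : (H.delete W).verts = H.verts \ W := rfl

@[simp] lemma delete_edges (W : Finset α) :
    (H.delete W).edges = H.edges.filter (fun e => Disjoint e W) := rfl

lemma delete_delete (W W' : Finset α) : (H.delete W).delete W' = H.delete (W ∪ W') := by
  ext : 1
  · simp [sdiff_sdiff_left]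
  · ext e; simp [and_assoc]

lemma delete_eq_self {W : Finset α} (h : Disjoint H.verts W) : H.delete W = H := by
  ext : 1
  · simpa using h
  · ext e
    simpa using fun he => disjoint_of_subset_left (H.edge_sub e he) h

lemma delete_delete_of_subset {W W' : Finset α} (h : W ⊆ W') :
    (H.delete W).delete W' = H.delete W' := by
  rw [delete_delete, union_eq_right.mpr h]

lemma delete_singleton_delete {v : α} {W : Finset α} (hv : v ∈ W) :
    (H.delete {v}).delete (W \ {v}) = H.delete W := by
  rw [delete_delete, union_sdiff_of_subset (singleton_subset_iff.mpr hv)]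

lemma IsUniform.delete (hu : H.IsUniform k) (W : Finset α) : (H.delete W).IsUniform k :=
  fun e he => hu e (mem_filter.mp he).1

theorem delete_induction {P : FinHypergraph α → Prop}
    (step : ∀ H : FinHypergraph α, (∀ v ∈ H.verts, P (H.delete {v})) → P H)
    (H : FinHypergraph α) : P H := by
  obtain ⟨n, hn⟩ : ∃ n, H.verts.card = n := ⟨_, rfl⟩
  induction n generalizing H with
  | zero => exact step H fun v hv => absurd hn (card_ne_zero_of_mem hv)
  | succ n ih =>
    refine step H fun v hv => ih _ ?_
    rw [delete_verts, card_sdiff_of_subset (singleton_subset_iff.mpr hv), hn, card_singleton,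
      Nat.add_sub_cancel]

noncomputable def matchings (H : FinHypergraph α) : Finset (Finset (Finset α)) :=
  H.edges.powerset.filter H.IsMatching

lemma mem_matchings {M : Finset (Finset α)} : M ∈ H.matchings ↔ H.IsMatching M := by
  simp only [matchings, mem_filter, mem_powerset, and_iff_right_iff_imp]
  exact And.left

lemma isMatching_iff {M : Finset (Finset α)} :
    H.IsMatching M ↔ M ⊆ H.edges ∧ (M : Set (Finset α)).Pairwise Disjoint :=
  Iff.rfl

@[simp] lemma isMatching_empty : H.IsMatching ∅ := by
  simp [isMatching_iff]

lemma isMatching_delete_iff {W : Finset α} {M : Finset (Finset α)} :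
    (H.delete W).IsMatching M ↔ H.IsMatching M ∧ ∀ f ∈ M, Disjoint f W := by
  simp only [isMatching_iff, delete_edges, subset_iff, mem_filter]
  grind

lemma isMatching_insert_iff {e : Finset α} {M : Finset (Finset α)} :
    H.IsMatching (insert e M) ↔
      e ∈ H.edges ∧ H.IsMatching M ∧ ∀ f ∈ M, e ≠ f → Disjoint e f := by
  simp only [isMatching_iff, coe_insert, Set.pairwise_insert_of_symm,
    insert_subset_iff]
  tauto

lemma matchings_delete (W : Finset α) :
    (H.delete W).matchings = H.matchings.filter (fun M => ∀ f ∈ M, Disjoint f W) := by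
  ext M
  simp only [mem_filter, mem_matchings, isMatching_delete_iff]

lemma IsMatching.card_biUnion {M : Finset (Finset α)} (hM : H.IsMatching M) (hu : H.IsUniform k) :
    (M.biUnion id).card = k * M.card := by
  simp only [Finset.card_biUnion (t := id) hM.2, id]
  rw [sum_congr rfl fun e he => hu e (hM.1 he), sum_const, smul_eq_mul, mul_comm]

lemma IsMatching.biUnion_subset {M : Finset (Finset α)} (hM : H.IsMatching M) :
    M.biUnion id ⊆ H.verts :=
  Finset.biUnion_subset.mpr fun e he => H.edge_sub e (hM.1 he)

lemma IsMatching.mul_card_le_card_verts {M : Finset (Finset α)} (hM : H.IsMatching M)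
    (hu : H.IsUniform k) : k * M.card ≤ H.verts.card := by
  rw [← hM.card_biUnion hu]
  exact card_le_card hM.biUnion_subset

lemma matchingPoly_eq_sum_matchings (H : FinHypergraph α) (k : ℕ) :
    H.matchingPoly k
      = ∑ M ∈ H.matchings, C ((-1) ^ M.card) * X ^ (H.verts.card - k * M.card) := by
  have hmaps : ∀ M ∈ H.matchings, M.card ∈ range (H.edges.card + 1) := fun M hM =>
    mem_range_succ_iff.mpr (card_le_card (mem_matchings.mp hM).1)
  rw [matchingPoly, ← sum_fiberwise_of_maps_to hmaps]
  refine sum_congr rfl fun r _ => ?_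
  rw [sum_congr rfl fun M hM => by rw [(mem_filter.mp hM).2], sum_const, matchCount]
  have : H.edges.powerset.filter (fun M => M.card = r ∧ H.IsMatching M)
      = H.matchings.filter (fun M => M.card = r) := by
    ext M; simp only [matchings, mem_filter]; tauto
  rw [this, nsmul_eq_mul, C_mul, ← C_eq_natCast]
  ring

lemma edges_eq_empty_of_verts_eq_empty (hu : H.IsUniform k) (hk : 1 ≤ k) (hV : H.verts = ∅) :
    H.edges = ∅ := by
  refine eq_empty_of_forall_notMem fun e he => ?_
  have : e = ∅ := subset_empty.mp (hV ▸ H.edge_sub e he)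
  have := hu e he
  simp_all only [card_empty]
  omega

lemma matchingPoly_of_verts_eq_empty (hu : H.IsUniform k) (hk : 1 ≤ k) (hV : H.verts = ∅) :
    H.matchingPoly k = 1 := by
  simp [matchingPoly_eq_sum_matchings, matchings, edges_eq_empty_of_verts_eq_empty hu hk hV, hV,
    filter_singleton]

lemma matchingPoly_delete_verts (hu : H.IsUniform k) (hk : 1 ≤ k) :
    (H.delete H.verts).matchingPoly k = 1 :=
  matchingPoly_of_verts_eq_empty (hu.delete _) hk (Finset.sdiff_self _)

lemma monic_matchingPoly (hu : H.IsUniform k) (hk : 1 ≤ k) : (H.matchingPoly k).Monic := by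
  rw [matchingPoly_eq_sum_matchings]
  refine monic_of_natDegree_le_of_coeff_eq_one H.verts.card (natDegree_sum_le_of_forall_le _ _
    fun M _ => (natDegree_C_mul_X_pow_le _ _).trans (Nat.sub_le _ _)) ?_
  rw [finsetSum_coeff, sum_eq_single ∅]
  · simp
  · intro M hM hM0
    have hle := (mem_matchings.mp hM).mul_card_le_card_verts hu
    have hpos : 0 < k * M.card := Nat.mul_pos hk (card_pos.mpr (nonempty_iff_ne_empty.mpr hM0))
    rw [coeff_C_mul_X_pow, if_neg (by omega)]
  · simp [mem_matchings]

lemma X_mul_matchingPoly_delete_singleton (hu : H.IsUniform k) {v : α} (hv : v ∈ H.verts) :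
    X * (H.delete {v}).matchingPoly k = ∑ M ∈ H.matchings with ∀ f ∈ M, Disjoint f {v},
      C ((-1) ^ M.card) * X ^ (H.verts.card - k * M.card) := by
  have hcard : (H.delete {v}).verts.card + 1 = H.verts.card := by
    simp [card_sdiff_of_subset (singleton_subset_iff.mpr hv),
      Nat.sub_add_cancel (card_pos.mpr ⟨v, hv⟩)]
  rw [matchingPoly_eq_sum_matchings, matchings_delete, mul_sum]
  refine sum_congr rfl fun M hM => ?_
  have := (mem_matchings.mp (matchings_delete {v} ▸ hM)).mul_card_le_card_verts (hu.delete {v})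
  rw [← hcard, Nat.sub_add_comm this, pow_succ]
  ring

lemma sum_matchings_mem_edge (hu : H.IsUniform k) (hk : 1 ≤ k) {e : Finset α}
    (he : e ∈ H.edges) :
    ∑ M ∈ H.matchings with e ∈ M, C ((-1) ^ M.card) * X ^ (H.verts.card - k * M.card)
      = -(H.delete e).matchingPoly k := by
  have he0 : e.Nonempty := card_pos.mp (hu e he ▸ hk)
  have hcard : (H.delete e).verts.card + k = H.verts.card := by
    simp [card_sdiff_of_subset (H.edge_sub e he), hu e he,
      Nat.sub_add_cancel (hu e he ▸ card_le_card (H.edge_sub e he))]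
  rw [matchingPoly_eq_sum_matchings, ← sum_neg_distrib]
  refine sum_nbij' (fun M => M.erase e) (insert e) (fun M hM => ?_) (fun M hM => ?_)
    (fun M hM => insert_erase (mem_filter.mp hM).2) (fun M hM => ?_) (fun M hM => ?_)
  · obtain ⟨hM, heM⟩ := mem_filter.mp hM
    rw [mem_matchings, ← insert_erase heM, isMatching_insert_iff] at hM
    simp only [mem_matchings, isMatching_delete_iff]
    exact ⟨hM.2.1, fun f hf => (hM.2.2 f hf (ne_of_mem_erase hf).symm).symm⟩
  · rw [mem_matchings, isMatching_delete_iff] at hM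
    simp only [mem_filter, mem_matchings, isMatching_insert_iff, mem_insert_self,
      and_true]
    exact ⟨he, hM.1, fun f hf _ => (hM.2 f hf).symm⟩
  · rw [mem_matchings, isMatching_delete_iff] at hM
    exact erase_insert fun heM => he0.ne_empty (disjoint_self.mp (hM.2 e heM))
  · obtain ⟨hM, heM⟩ := mem_filter.mp hM
    have hle := (mem_matchings.mp hM).mul_card_le_card_verts hu
    rw [← card_erase_add_one heM, ← hcard] at hle ⊢
    rw [mul_add_one, pow_succ, mul_neg_one, C_neg, neg_mul, Nat.add_sub_add_right]

lemma matchingPoly_eq_X_mul_sub (hu : H.IsUniform k) (hk : 1 ≤ k) {v : α} (hv : v ∈ H.verts) :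
    H.matchingPoly k = X * (H.delete {v}).matchingPoly k
      - ∑ e ∈ H.edges with v ∈ e, (H.delete e).matchingPoly k := by
  set term := fun M : Finset (Finset α) =>
    C ((-1 : ℝ) ^ M.card) * X ^ (H.verts.card - k * M.card)
  have hhit : H.matchings.filter (fun M => ¬ ∀ f ∈ M, Disjoint f {v})
      = (H.edges.filter (v ∈ ·)).biUnion (fun e => H.matchings.filter (e ∈ ·)) := by
    ext M
    simp only [mem_filter, mem_biUnion, disjoint_singleton_right, not_forall, not_not]
    constructor
    · rintro ⟨hM, e, heM, hve⟩
      exact ⟨e, ⟨(mem_matchings.mp hM).1 heM, hve⟩, hM, heM⟩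
    · rintro ⟨e, ⟨-, hve⟩, hM, heM⟩
      exact ⟨hM, e, heM, hve⟩
  have hdisj : (H.edges.filter (v ∈ ·) : Set (Finset α)).PairwiseDisjoint
      (fun e => H.matchings.filter (e ∈ ·)) := by
    intro e₁ he₁ e₂ he₂ hne
    refine disjoint_left.mpr fun M hM₁ hM₂ => ?_
    have hM := mem_matchings.mp (mem_filter.mp hM₁).1
    exact disjoint_left.mp (hM.2 e₁ (mem_filter.mp hM₁).2 e₂ (mem_filter.mp hM₂).2 hne)
      (mem_filter.mp he₁).2 (mem_filter.mp he₂).2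
  calc H.matchingPoly k
      = ∑ M ∈ H.matchings with ∀ f ∈ M, Disjoint f {v}, term M
        + ∑ M ∈ H.matchings with ¬ ∀ f ∈ M, Disjoint f {v}, term M := by
        rw [sum_filter_add_sum_filter_not, matchingPoly_eq_sum_matchings]
    _ = X * (H.delete {v}).matchingPoly k
        + ∑ e ∈ H.edges with v ∈ e, ∑ M ∈ H.matchings with e ∈ M, term M := by
        rw [X_mul_matchingPoly_delete_singleton hu hv, hhit, sum_biUnion hdisj]
    _ = _ := by
        rw [sum_congr rfl fun e he => sum_matchings_mem_edge hu hk (mem_filter.mp he).1,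
          sum_neg_distrib, sub_eq_add_neg]

lemma card_verts_unmatched (hu : H.IsUniform k) {M : Finset (Finset α)} (hM : H.IsMatching M) :
    (H.verts.filter fun v => ∀ f ∈ M, Disjoint f {v}).card = H.verts.card - k * M.card := by
  have : H.verts.filter (fun v => ∀ f ∈ M, Disjoint f {v}) = H.verts \ M.biUnion id := by
    ext v; simp [disjoint_singleton_right]
  rw [this, card_sdiff_of_subset hM.biUnion_subset, hM.card_biUnion hu]

lemma derivative_matchingPoly (hu : H.IsUniform k) :
    derivative (H.matchingPoly k) = ∑ v ∈ H.verts, (H.delete {v}).matchingPoly k := by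
  have hdel : ∀ v ∈ H.verts, (H.delete {v}).matchingPoly k
      = ∑ M ∈ H.matchings, if ∀ f ∈ M, Disjoint f {v} then
          C ((-1 : ℝ) ^ M.card) * X ^ (H.verts.card - 1 - k * M.card) else 0 := fun v hv => by
    rw [matchingPoly_eq_sum_matchings, matchings_delete, sum_filter, delete_verts,
      card_sdiff_of_subset (singleton_subset_iff.mpr hv), card_singleton]
  rw [sum_congr rfl hdel, sum_comm, matchingPoly_eq_sum_matchings, derivative_sum]
  refine sum_congr rfl fun M hM => ?_
  rw [← sum_filter, sum_const, card_verts_unmatched hu (mem_matchings.mp hM),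
    derivative_C_mul_X_pow, Nat.sub_right_comm, nsmul_eq_mul, C_mul, ← C_eq_natCast]
  ring

lemma eval_matchingPoly_eq_mul_sub (hu : H.IsUniform k) (hk : 1 ≤ k) {v : α} (hv : v ∈ H.verts)
    (x : ℝ) :
    (H.matchingPoly k).eval x = x * ((H.delete {v}).matchingPoly k).eval x
      - ∑ e ∈ H.edges with v ∈ e, ((H.delete e).matchingPoly k).eval x := by
  rw [matchingPoly_eq_X_mul_sub hu hk hv, eval_sub, eval_mul, eval_X, eval_finsetSum]

lemma exists_isRoot_ge_maxRoot_delete_singleton (hu : H.IsUniform k) (hk : 1 ≤ k) {v : α}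
    (hv : v ∈ H.verts)
    (h : ∀ e ∈ H.edges, v ∈ e → maxRoot ((H.delete e).matchingPoly k)
      ≤ maxRoot ((H.delete {v}).matchingPoly k)) :
    ∃ y, (H.matchingPoly k).IsRoot y ∧ maxRoot ((H.delete {v}).matchingPoly k) ≤ y := by
  refine (monic_matchingPoly hu hk).exists_isRoot_ge_of_eval_nonpos ?_
  rw [eval_matchingPoly_eq_mul_sub hu hk hv, maxRoot_mul_eval_maxRoot, zero_sub, neg_nonpos]
  exact sum_nonneg fun e he => (monic_matchingPoly (hu.delete e) hk).eval_nonneg_of_maxRoot_le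
    (h e (mem_filter.mp he).1 (mem_filter.mp he).2)

lemma maxRoot_delete_le (hu : H.IsUniform k) (hk : 1 ≤ k) (W : Finset α) :
    maxRoot ((H.delete W).matchingPoly k) ≤ maxRoot (H.matchingPoly k) := by
  induction H using delete_induction generalizing W with
  | step H ih =>
  have hsingle : ∀ v ∈ H.verts,
      maxRoot ((H.delete {v}).matchingPoly k) ≤ maxRoot (H.matchingPoly k) := fun v hv => by
    obtain ⟨y, hy, hle⟩ := exists_isRoot_ge_maxRoot_delete_singleton hu hk hv fun e _ hve => by
      simpa only [delete_singleton_delete hve] using ih v hv (hu.delete {v}) (e \ {v})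
    exact hle.trans (le_maxRoot (monic_matchingPoly hu hk).ne_zero hy)
  by_cases hW : Disjoint H.verts W
  · rw [delete_eq_self hW]
  obtain ⟨v, hv, hvW⟩ := not_disjoint_iff.mp hW
  rw [← delete_singleton_delete hvW]
  exact (ih v hv (hu.delete {v}) (W \ {v})).trans (hsingle v hv)

lemma isRoot_maxRoot_matchingPoly (hu : H.IsUniform k) (hk : 1 ≤ k) (hV : H.verts.Nonempty) :
    (H.matchingPoly k).IsRoot (maxRoot (H.matchingPoly k)) := by
  obtain ⟨v, hv⟩ := hV
  obtain ⟨y, hy, -⟩ := exists_isRoot_ge_maxRoot_delete_singleton hu hk hv fun e _ hve => by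
    simpa only [delete_singleton_delete hve] using maxRoot_delete_le (hu.delete {v}) hk (e \ {v})
  exact isRoot_maxRoot (monic_matchingPoly hu hk).ne_zero ⟨y, hy⟩

lemma eval_delete_nonneg (hu : H.IsUniform k) (hk : 1 ≤ k) {x : ℝ}
    (hx : maxRoot (H.matchingPoly k) ≤ x) (W : Finset α) :
    0 ≤ ((H.delete W).matchingPoly k).eval x :=
  (monic_matchingPoly (hu.delete W) hk).eval_nonneg_of_maxRoot_le
    ((maxRoot_delete_le hu hk W).trans hx)

lemma isRoot_of_isRoot_delete (hu : H.IsUniform k) (hk : 1 ≤ k) {x : ℝ}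
    (hx : maxRoot (H.matchingPoly k) ≤ x) {W : Finset α}
    (hW : ((H.delete W).matchingPoly k).IsRoot x) : (H.matchingPoly k).IsRoot x := by
  have hV : H.verts.Nonempty := by
    by_contra! hV
    rw [matchingPoly_of_verts_eq_empty (hu.delete W) hk (by simp [hV])] at hW
    simp at hW
  have hxW := le_maxRoot (monic_matchingPoly (hu.delete W) hk).ne_zero hW
  have : maxRoot (H.matchingPoly k) = x := hx.antisymm (hxW.trans (maxRoot_delete_le hu hk W))
  exact this ▸ isRoot_maxRoot_matchingPoly hu hk hV

lemma isRoot_delete_edge (hu : H.IsUniform k) (hk : 1 ≤ k) {x : ℝ}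
    (hx : maxRoot (H.matchingPoly k) ≤ x) {w : α} (hw : ((H.delete {w}).matchingPoly k).IsRoot x)
    {e : Finset α} (he : e ∈ H.edges) (hwe : w ∈ e) :
    ((H.delete e).matchingPoly k).IsRoot x := by
  have hsum := (isRoot_of_isRoot_delete hu hk hx hw).eq_zero
  rw [eval_matchingPoly_eq_mul_sub hu hk (H.edge_sub e he hwe), hw.eq_zero, mul_zero, zero_sub,
    neg_eq_zero, sum_eq_zero_iff_of_nonneg fun f _ => eval_delete_nonneg hu hk hx f] at hsum
  exact hsum e (mem_filter.mpr ⟨he, hwe⟩)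

lemma Connected.exists_edge_crossing (hc : H.Connected) {s : Finset α} {a b : α}
    (ha : a ∈ H.verts) (has : a ∈ s) (hb : b ∈ H.verts) (hbs : b ∉ s) :
    ∃ e ∈ H.edges, ∃ w ∈ e, ∃ u ∈ e, w ∈ s ∧ u ∉ s := by
  obtain ⟨w, u, ⟨e, he, hw, hu⟩, hws, hus⟩ :=
    (hc.2 a ha b hb).exists_rel_of_pred_of_not_pred has hbs
  exact ⟨e, he, w, hw, u, hu, hws, hus⟩

lemma Connected.eval_maxRoot_delete_pos (hc : H.Connected) (hu : H.IsUniform k) (hk : 1 ≤ k)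
    {W₀ : Finset α} (hW₀V : W₀ ⊆ H.verts) (hW₀ : W₀.Nonempty) :
    0 < ((H.delete W₀).matchingPoly k).eval (maxRoot (H.matchingPoly k)) := by
  set θ := maxRoot (H.matchingPoly k)
  refine (eval_delete_nonneg hu hk le_rfl W₀).lt_of_ne fun hroot₀ => ?_
  set S := H.verts.powerset.filter fun W => ((H.delete W).matchingPoly k).IsRoot θ
  have hW₀S : W₀ ∈ S := mem_filter.mpr ⟨mem_powerset.mpr hW₀V, hroot₀.symm⟩
  obtain ⟨W, hWS, hmax⟩ := exists_max_image S card ⟨W₀, hW₀S⟩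
  obtain ⟨hWV, hroot⟩ := mem_filter.mp hWS
  replace hWV := mem_powerset.mp hWV
  obtain ⟨b, hbW⟩ : W.Nonempty := card_pos.mp ((card_pos.mpr hW₀).trans_le (hmax W₀ hW₀S))
  obtain ⟨a, haV, haW⟩ : ∃ a ∈ H.verts, a ∉ W := by
    by_contra! h
    rw [subset_antisymm hWV h, matchingPoly_delete_verts hu hk] at hroot
    simp at hroot
  obtain ⟨e, he, w, hwe, u, hue, hwW, huW⟩ := hc.exists_edge_crossing (hWV hbW) hbW haV haW
  have hw : (((H.delete (W \ e)).delete {w}).matchingPoly k).IsRoot θ := by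
    rw [delete_delete]
    refine isRoot_of_isRoot_delete (hu.delete _) hk (maxRoot_delete_le hu hk _) (W := W) ?_
    rwa [delete_delete_of_subset (union_subset sdiff_subset (singleton_subset_iff.mpr hwW))]
  have hWe := isRoot_delete_edge (hu.delete _) hk (maxRoot_delete_le hu hk _) hw
    (mem_filter.mpr ⟨he, disjoint_sdiff⟩) hwe
  rw [delete_delete, sdiff_union_self_eq_union] at hWe
  have hWeS : W ∪ e ∈ S :=
    mem_filter.mpr ⟨mem_powerset.mpr (union_subset hWV (H.edge_sub e he)), hWe⟩
  exact (hmax _ hWeS).not_gt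
    (card_lt_card ⟨subset_union_left, fun h => huW (h (mem_union_right _ hue))⟩)

lemma Connected.maxRoot_matchingPoly_pos (hc : H.Connected) (hu : H.IsUniform k) (hk : 1 ≤ k)
    {e : Finset α} (he : e ∈ H.edges) : 0 < maxRoot (H.matchingPoly k) := by
  set θ := maxRoot (H.matchingPoly k)
  obtain ⟨v, hve⟩ := card_pos.mp (hu e he ▸ hk)
  have hv := H.edge_sub e he hve
  have hroot : θ * ((H.delete {v}).matchingPoly k).eval θ
      = ∑ f ∈ H.edges with v ∈ f, ((H.delete f).matchingPoly k).eval θ := by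
    rw [← sub_eq_zero, ← eval_matchingPoly_eq_mul_sub hu hk hv]
    exact (isRoot_maxRoot_matchingPoly hu hk ⟨v, hv⟩).eq_zero
  have hsum : 0 < ∑ f ∈ H.edges with v ∈ f, ((H.delete f).matchingPoly k).eval θ :=
    sum_pos (fun f hf => hc.eval_maxRoot_delete_pos hu hk (H.edge_sub f (mem_filter.mp hf).1)
      ⟨v, (mem_filter.mp hf).2⟩) ⟨e, mem_filter.mpr ⟨he, hve⟩⟩
  exact pos_of_mul_pos_left (hroot ▸ hsum)
    (hc.eval_maxRoot_delete_pos hu hk (singleton_subset_iff.mpr hv) (singleton_nonempty v)).le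

lemma norm_aeval_delete_singleton_mul_le (hu : H.IsUniform k) (hk : 1 ≤ k) {z : ℂ}
    (hz : maxRoot (H.matchingPoly k) < ‖z‖) {v : α} (hv : v ∈ H.verts)
    (ih : ∀ W, ‖aeval z (((H.delete {v}).delete W).matchingPoly k)‖
        * ((H.delete {v}).matchingPoly k).eval ‖z‖
      ≤ (((H.delete {v}).delete W).matchingPoly k).eval ‖z‖
        * ‖aeval z ((H.delete {v}).matchingPoly k)‖) :
    ‖aeval z ((H.delete {v}).matchingPoly k)‖ * (H.matchingPoly k).eval ‖z‖
      ≤ ((H.delete {v}).matchingPoly k).eval ‖z‖ * ‖aeval z (H.matchingPoly k)‖ := by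
  set r := ‖z‖
  set Av := ‖aeval z ((H.delete {v}).matchingPoly k)‖
  set Ev := ((H.delete {v}).matchingPoly k).eval r
  set S₁ := ∑ e ∈ H.edges with v ∈ e, ‖aeval z ((H.delete e).matchingPoly k)‖
  set S₂ := ∑ e ∈ H.edges with v ∈ e, ((H.delete e).matchingPoly k).eval r
  have hEv : 0 < Ev := (monic_matchingPoly (hu.delete {v}) hk).eval_pos_of_maxRoot_lt
    ((maxRoot_delete_le hu hk {v}).trans_lt hz)
  have htri : r * Av - S₁ ≤ ‖aeval z (H.matchingPoly k)‖ := by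
    rw [matchingPoly_eq_X_mul_sub hu hk hv, map_sub, map_mul, aeval_X, map_sum]
    refine le_trans ?_ (norm_sub_norm_le _ _)
    rw [norm_mul]
    exact sub_le_sub_left (norm_sum_le _ _) _
  have hS : Ev * S₁ ≤ S₂ * Av := by
    rw [mul_sum, sum_mul]
    refine sum_le_sum fun e he => ?_
    have := ih (e \ {v})
    rw [delete_singleton_delete (mem_filter.mp he).2] at this
    linarith
  calc Av * (H.matchingPoly k).eval r
      = Ev * (r * Av) - Av * S₂ := by rw [eval_matchingPoly_eq_mul_sub hu hk hv]; ring
    _ ≤ Ev * (r * Av - S₁) := by linarith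
    _ ≤ Ev * ‖aeval z (H.matchingPoly k)‖ := mul_le_mul_of_nonneg_left htri hEv.le

lemma norm_aeval_delete_mul_le (hu : H.IsUniform k) (hk : 1 ≤ k) {z : ℂ}
    (hz : maxRoot (H.matchingPoly k) < ‖z‖) (W : Finset α) :
    ‖aeval z ((H.delete W).matchingPoly k)‖ * (H.matchingPoly k).eval ‖z‖
      ≤ ((H.delete W).matchingPoly k).eval ‖z‖ * ‖aeval z (H.matchingPoly k)‖ := by
  induction H using delete_induction generalizing W with
  | step H ih =>
  by_cases hW : Disjoint H.verts W
  · rw [delete_eq_self hW, mul_comm]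
  · obtain ⟨v, hv, hvW⟩ := not_disjoint_iff.mp hW
    have ihv := ih v hv (hu.delete {v}) ((maxRoot_delete_le hu hk {v}).trans_lt hz)
    have hstep := norm_aeval_delete_singleton_mul_le hu hk hz hv ihv
    have hEv : 0 < ((H.delete {v}).matchingPoly k).eval ‖z‖ :=
      (monic_matchingPoly (hu.delete {v}) hk).eval_pos_of_maxRoot_lt
        ((maxRoot_delete_le hu hk {v}).trans_lt hz)
    have hEW := eval_delete_nonneg hu hk hz.le W
    have ihW := ihv (W \ {v})
    rw [delete_singleton_delete hvW] at ihW
    refine le_of_mul_le_mul_right ?_ hEv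
    nlinarith [mul_le_mul_of_nonneg_left hstep hEW, mul_le_mul_of_nonneg_right ihW
      ((monic_matchingPoly hu hk).eval_nonneg_of_maxRoot_le hz.le)]

lemma aeval_matchingPoly_ne_zero (hu : H.IsUniform k) (hk : 1 ≤ k) {z : ℂ}
    (hz : maxRoot (H.matchingPoly k) < ‖z‖) : aeval z (H.matchingPoly k) ≠ 0 := by
  have h := norm_aeval_delete_mul_le hu hk hz H.verts
  rw [matchingPoly_delete_verts hu hk, map_one, eval_one, norm_one, one_mul, one_mul] at h
  exact norm_pos_iff.mp (((monic_matchingPoly hu hk).eval_pos_of_maxRoot_lt hz).trans_le h)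

lemma lam_eq_maxRoot (hu : H.IsUniform k) (hk : 1 ≤ k) (hV : H.verts.Nonempty)
    (h₀ : 0 ≤ maxRoot (H.matchingPoly k)) : H.lam k = maxRoot (H.matchingPoly k) := by
  refine IsGreatest.csSup_eq ⟨⟨maxRoot (H.matchingPoly k), ?_, ?_⟩, ?_⟩
  · rw [← Complex.coe_algebraMap, aeval_algebraMap_apply_eq_algebraMap_eval,
      (isRoot_maxRoot_matchingPoly hu hk hV).eq_zero, map_zero]
  · simp [abs_of_nonneg h₀]
  · rintro _ ⟨z, hz, rfl⟩
    exact not_lt.mp fun hlt => aeval_matchingPoly_ne_zero hu hk hlt hz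

end FinHypergraph

/-- For a connected `k`-graph with maximum degree `Δ ≥ 2`, the maximum-modulus zero
`λ(H)` of `μ(H,x)` is a positive real root, it is simple (the derivative does not vanish
there), and indeed `Σ_{v∈V(H)} μ(H−v, λ(H)) > 0`. -/
theorem lam_simple_root {α : Type*} [DecidableEq α]
    (H : FinHypergraph α) (k Δ : ℕ) (hk : 2 ≤ k) (hH : H.IsUniform k)
    (hconn : H.Connected) (hΔ : H.maxDegree Δ) (hΔ2 : 2 ≤ Δ) :
    0 < H.lam k ∧
      (H.matchingPoly k).IsRoot (H.lam k) ∧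
      (Polynomial.derivative (H.matchingPoly k)).eval (H.lam k) ≠ 0 ∧
      0 < ∑ v ∈ H.verts, ((H.delete {v}).matchingPoly k).eval (H.lam k) := by
  have hk1 : 1 ≤ k := by omega
  obtain ⟨v, hv, hdeg⟩ := hΔ.2
  obtain ⟨e, he⟩ : (H.edges.filter (v ∈ ·)).Nonempty :=
    Finset.card_pos.mp (show 0 < H.degree v by omega)
  have hpos := hconn.maxRoot_matchingPoly_pos hH hk1 (Finset.mem_filter.mp he).1
  have hlam := FinHypergraph.lam_eq_maxRoot hH hk1 ⟨v, hv⟩ hpos.le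
  have hsum : 0 < ∑ v ∈ H.verts, ((H.delete {v}).matchingPoly k).eval (H.lam k) :=
    hlam ▸ Finset.sum_pos (fun u hu => hconn.eval_maxRoot_delete_pos hH hk1
      (Finset.singleton_subset_iff.mpr hu) (Finset.singleton_nonempty u)) ⟨v, hv⟩
  have hroot := FinHypergraph.isRoot_maxRoot_matchingPoly hH hk1 ⟨v, hv⟩
  refine ⟨hlam ▸ hpos, hlam ▸ hroot, ?_, hsum⟩
  rw [FinHypergraph.derivative_matchingPoly hH, Polynomial.eval_finsetSum]
  exact hsum.ne'
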